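/- arXiv:2407.07654 — 2 statements merged into one kernel-verified Lean document; each statement's English description precedes it below -/
import Mathlib

section
/- Let n > 3 be an integer. Then T̃ₙ(2, 0) is invertible and the sign of the (i,j)-entry of T̃ₙ(2, 0)⁻¹ is: +1 if (i,j) ∈ {3,…,n−2}×{3,…,n−2} or (i,j) ∈ {(1,n),(n,1)}; 0 if i ∈ {2, n−1} or j ∈ {2, n−1}, except for (i,j) ∈ {(1,2),(2,1),(n−1,n),(n,n−1)}; and −1 in all remaining cases. -/
open Matrix BigOperators Finset

/-!
The inverse of `T̃ₙ(2, 0)` is given in closed form by the Green's function of the recurrence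
`-x (k-1) + 2 x k - x (k+1) = δ`, namely
`(min i j - 1) (n - 2 - max i j) / (n - 3)` (0-based indices), which is checked row by row.
Its sign is `sign (min i j - 1) * sign (n - 2 - max i j)`, and reading off when each factor is
negative, zero or positive gives the sign pattern.
-/

/-- The symmetric tridiagonal near-Toeplitz matrix with corner diagonal entries `bt`,
interior diagonal entries `b`, and off-diagonal entries `-1` (0-based indices). -/
noncomputable def Ttilde (n : ℕ) (b bt : ℝ) : Matrix (Fin n) (Fin n) ℝ :=
  Matrix.of fun i j =>
    if (i : ℕ) = (j : ℕ) then (if (i : ℕ) = 0 ∨ (i : ℕ) = n - 1 then bt else b)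
    else if (i : ℕ) + 1 = (j : ℕ) ∨ (j : ℕ) + 1 = (i : ℕ) then (-1 : ℝ) else 0

/-- The maximum absolute row sum (operator norm induced by the sup norm). -/
noncomputable def normInf {n : ℕ} (A : Matrix (Fin n) (Fin n) ℝ) : ℝ :=
  ⨆ i : Fin n, ∑ j : Fin n, |A i j|

theorem Fin.sum_ite_val_eq {M : Type*} [AddCommMonoid M] (n a : ℕ) (f : ℕ → M) :
    (∑ k : Fin n, if (k : ℕ) = a then f k else 0) = if a < n then f a else 0 := by
  rw [Fin.sum_univ_eq_sum_range (fun k => if k = a then f k else 0), sum_ite_eq']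
  simp only [mem_range]

theorem Ttilde_mulVec_apply (n : ℕ) (b bt : ℝ) (f : ℕ → ℝ) (i : Fin n) :
    (Ttilde n b bt *ᵥ fun k => f k) i =
      (if (i : ℕ) = 0 ∨ (i : ℕ) = n - 1 then bt else b) * f i
        - (if (i : ℕ) = 0 then 0 else f (i - 1)) - (if (i : ℕ) + 1 < n then f (i + 1) else 0) := by
  obtain ⟨i, hi⟩ := i
  have hterm : ∀ k : ℕ,
      (if i = k then (if i = 0 ∨ i = n - 1 then bt else b)
        else if i + 1 = k ∨ k + 1 = i then (-1 : ℝ) else 0) * f k =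
      (if i = 0 ∨ i = n - 1 then bt else b) * (if k = i then f k else 0)
        - (if k + 1 = i then f k else 0) - (if k = i + 1 then f k else 0) := by
    intro k
    split_ifs <;> subst_vars <;> first | omega | ring
  simp only [mulVec, dotProduct, Ttilde, of_apply, hterm, sum_sub_distrib, ← mul_sum,
    Fin.sum_ite_val_eq, hi, if_true]
  rcases i with _ | i
  · simp
  · simp [Fin.sum_ite_val_eq, show i < n by omega]

/- The Green's function of the three-term recurrence: `k ↦ k - 1` and `k ↦ n - 2 - k` solve
`-x (k-1) + 2 x k - x (k+1) = 0` and satisfy the first resp. last boundary row of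
`Ttilde n 2 0`; `n - 3` normalises the jump of the second difference on the diagonal. -/
noncomputable def ttildeInvEntry (n k l : ℕ) : ℝ :=
  (((min k l : ℕ) : ℝ) - 1) * ((n : ℝ) - 2 - (max k l : ℕ)) / ((n : ℝ) - 3)

theorem ttildeInvEntry_of_le {n k l : ℕ} (h : k ≤ l) :
    ttildeInvEntry n k l = ((k : ℝ) - 1) * ((n : ℝ) - 2 - l) / ((n : ℝ) - 3) := by
  rw [ttildeInvEntry, min_eq_left h, max_eq_right h]

theorem ttildeInvEntry_of_ge {n k l : ℕ} (h : l ≤ k) :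
    ttildeInvEntry n k l = ((l : ℝ) - 1) * ((n : ℝ) - 2 - k) / ((n : ℝ) - 3) := by
  rw [ttildeInvEntry, min_eq_right h, max_eq_left h]

theorem natCast_sub_three_ne_zero {n : ℕ} (hn : n ≠ 3) : (n : ℝ) - 3 ≠ 0 := by
  rw [sub_ne_zero]
  exact_mod_cast hn

theorem ttildeInvEntry_one_left {n : ℕ} (hn : n ≠ 3) (j : ℕ) :
    ttildeInvEntry n 1 j = if j = 0 then -1 else 0 := by
  have hd := natCast_sub_three_ne_zero hn
  rcases Nat.eq_zero_or_pos j with rfl | hj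
  · rw [ttildeInvEntry_of_ge (Nat.zero_le 1), if_pos rfl]
    field_simp
    ring
  · rw [ttildeInvEntry_of_le hj, if_neg hj.ne']
    simp

theorem ttildeInvEntry_sub_two_left {n j : ℕ} (h2 : 2 ≤ n) (hn : n ≠ 3) (hj : j < n) :
    ttildeInvEntry n (n - 2) j = if j = n - 1 then -1 else 0 := by
  have hd := natCast_sub_three_ne_zero hn
  rcases Nat.lt_or_ge j (n - 1) with hj' | hj'
  · rw [ttildeInvEntry_of_ge (by omega), if_neg hj'.ne, Nat.cast_sub h2]
    simp
  · rw [ttildeInvEntry_of_le (by omega), if_pos (by omega), show j = n - 2 + 1 by omega]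
    push_cast [Nat.cast_sub h2]
    field_simp
    ring

theorem ttildeInvEntry_second_diff {n : ℕ} (hn : n ≠ 3) (c j : ℕ) :
    2 * ttildeInvEntry n (c + 1) j - ttildeInvEntry n c j - ttildeInvEntry n (c + 2) j =
      if c + 1 = j then 1 else 0 := by
  have hd := natCast_sub_three_ne_zero hn
  rcases lt_trichotomy (c + 1) j with h | rfl | h
  · rw [ttildeInvEntry_of_le h.le, ttildeInvEntry_of_le (by omega), ttildeInvEntry_of_le h,
      if_neg h.ne]
    push_cast
    ring
  · rw [ttildeInvEntry_of_le le_rfl, ttildeInvEntry_of_le (by omega),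
      ttildeInvEntry_of_ge (by omega), if_pos rfl]
    push_cast
    field_simp
    ring
  · rw [ttildeInvEntry_of_ge h.le, ttildeInvEntry_of_ge (by omega),
      ttildeInvEntry_of_ge (by omega), if_neg h.ne']
    push_cast
    ring

theorem ttildeInvEntry_recurrence {n i j : ℕ} (hn : 3 < n) (hi : i < n) (hj : j < n) :
    (if i = 0 ∨ i = n - 1 then 0 else 2) * ttildeInvEntry n i j
      - (if i = 0 then 0 else ttildeInvEntry n (i - 1) j)
      - (if i + 1 < n then ttildeInvEntry n (i + 1) j else 0) = if i = j then 1 else 0 := by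
  rcases Nat.eq_zero_or_pos i with rfl | hi0
  · rw [if_pos (Or.inl rfl), if_pos rfl, if_pos (by omega), ttildeInvEntry_one_left hn.ne']
    by_cases hj0 : j = 0 <;> simp [hj0, eq_comm]
  by_cases hil : i = n - 1
  · rw [if_pos (Or.inr hil), if_neg hi0.ne', if_neg (by omega),
      show i - 1 = n - 2 by omega, ttildeInvEntry_sub_two_left (by omega) hn.ne' hj]
    by_cases hjl : j = n - 1 <;> simp [hjl, hil, Ne.symm]
  obtain ⟨c, rfl⟩ : ∃ c, i = c + 1 := ⟨i - 1, by omega⟩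
  rw [if_neg (by omega), if_neg (by omega), if_pos (by omega), Nat.add_sub_cancel,
    ← ttildeInvEntry_second_diff hn.ne' c j]

theorem Int.sign_natCast_sub (a b : ℕ) :
    Int.sign ((a : ℤ) - b) = if a < b then -1 else if a = b then 0 else 1 := by
  split_ifs with hlt heq
  · exact Int.sign_eq_neg_one_of_neg (by omega)
  · simp [heq]
  · exact Int.sign_eq_one_of_pos (by omega)

theorem Real.sign_div_of_pos (x : ℝ) {c : ℝ} (hc : 0 < c) : Real.sign (x / c) = Real.sign x := by
  rcases lt_trichotomy x 0 with hx | rfl | hx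
  · rw [Real.sign_of_neg hx, Real.sign_of_neg (div_neg_of_neg_of_pos hx hc)]
  · rw [zero_div]
  · rw [Real.sign_of_pos hx, Real.sign_of_pos (div_pos hx hc)]

theorem sign_ttildeInvEntry {n k l : ℕ} (hn : 3 < n) (hk : k < n) (hl : l < n) :
    Real.sign (ttildeInvEntry n k l) =
      if (2 ≤ min k l ∧ max k l ≤ n - 3) ∨ (min k l = 0 ∧ max k l = n - 1) then 1
      else if min k l = 1 ∨ max k l = n - 2 then 0 else -1 := by
  -- the casts from `ℕ` are kept so that `Int.sign_natCast_sub` applies to both factors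
  have hint : ttildeInvEntry n k l =
      ((((min k l : ℕ) : ℤ) - ((1 : ℕ) : ℤ)) * (((n - 2 : ℕ) : ℤ) - ((max k l : ℕ) : ℤ)) : ℤ)
        / ((n : ℝ) - 3) := by
    rw [ttildeInvEntry]
    push_cast [Nat.cast_sub (by omega : 2 ≤ n)]
    ring
  have hpos : (0 : ℝ) < n - 3 := by
    rw [sub_pos]
    exact_mod_cast hn
  rw [hint, Real.sign_div_of_pos _ hpos, Real.sign_intCast, Int.sign_mul, Int.sign_natCast_sub,
    Int.sign_natCast_sub]
  split_ifs <;> first | (exfalso; omega) | norm_num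

noncomputable def ttildeInv (n : ℕ) : Matrix (Fin n) (Fin n) ℝ :=
  Matrix.of fun i j => ttildeInvEntry n i j

theorem Ttilde_two_zero_mul_ttildeInv {n : ℕ} (hn : 3 < n) : Ttilde n 2 0 * ttildeInv n = 1 := by
  ext i j
  rw [one_apply]
  exact (Ttilde_mulVec_apply n 2 0 (fun k => ttildeInvEntry n k j) i).trans
    ((ttildeInvEntry_recurrence hn i.isLt j.isLt).trans (if_congr Fin.ext_iff.symm rfl rfl))

theorem stmt10 (n : ℕ) (hn : 3 < n) :
    IsUnit (Ttilde n 2 0) ∧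
    ∀ i j : Fin n,
      Real.sign ((Ttilde n 2 0)⁻¹ i j) =
        if (2 ≤ (i : ℕ) ∧ (i : ℕ) ≤ n - 3 ∧ 2 ≤ (j : ℕ) ∧ (j : ℕ) ≤ n - 3)
            ∨ ((i : ℕ) = 0 ∧ (j : ℕ) = n - 1) ∨ ((i : ℕ) = n - 1 ∧ (j : ℕ) = 0)
        then 1
        else if ((i : ℕ) = 1 ∨ (i : ℕ) = n - 2 ∨ (j : ℕ) = 1 ∨ (j : ℕ) = n - 2)
            ∧ ¬(((i : ℕ) = 0 ∧ (j : ℕ) = 1) ∨ ((i : ℕ) = 1 ∧ (j : ℕ) = 0)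
                ∨ ((i : ℕ) = n - 2 ∧ (j : ℕ) = n - 1) ∨ ((i : ℕ) = n - 1 ∧ (j : ℕ) = n - 2))
        then 0 else -1 := by
  have hmul := Ttilde_two_zero_mul_ttildeInv hn
  refine ⟨(isUnit_iff_isUnit_det _).mpr (isUnit_det_of_right_inverse hmul), fun i j => ?_⟩
  rw [inv_eq_right_inv hmul, ttildeInv, of_apply, sign_ttildeInvEntry hn i.isLt j.isLt]
  exact if_congr (by omega) rfl (if_congr (by omega) rfl rfl)
end

section
/- Let n ≥ 9 be an integer and b̃ ≤ 0. Then ‖T̃ₙ(2, b̃)⁻¹‖∞ ≤ (n+1)²/8 + (4 − (2+|b̃|)·n)/(2(1+|b̃|)), with equality when n is odd. -/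
open Matrix BigOperators Finset

/-!
Put `c = 1 - b̃ ≥ 1` and `θ = c ((n - 1) c - 2) > 0`. The inverse of `T̃ₙ(2, b̃)` is `θ⁻¹` times
the Green kernel `(1 - min(i,j) c) (1 - (n - 1 - max(i,j)) c)`, whose factors have constant sign
apart from the value `1` at index `0`, so every absolute row sum is an explicit polynomial. An
interior row `i` sums to `B - (n - 1 - 2i)² / 8`, where `B` is the claimed bound: at most `B`, with
equality at the middle row when `n` is odd. Both end rows sum to `θ⁻¹ ∑_{j<n} |1 - j c|`, and
`θ B - ∑_{j<n} |1 - j c|` is `1/8` of a polynomial in `c - 1` and `m = n - 1` whose coefficients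
are nonnegative once `m ≥ 8`.
-/

theorem sum_Ttilde_mul {n : ℕ} (b bt : ℝ) (f : ℕ → ℝ) (i : Fin n) :
    ∑ k : Fin n, Ttilde n b bt i k * f k =
      (if (i : ℕ) = 0 ∨ (i : ℕ) = n - 1 then bt else b) * f i
        - (if (i : ℕ) + 1 < n then f (i + 1) else 0)
        - (if 0 < (i : ℕ) then f (i - 1) else 0) := by
  set d := if (i : ℕ) = 0 ∨ (i : ℕ) = n - 1 then bt else b
  have entry_mul (k : ℕ) : (if (i : ℕ) = k then d else
      if (i : ℕ) + 1 = k ∨ k + 1 = (i : ℕ) then (-1 : ℝ) else 0) * f k =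
      (if (i : ℕ) = k then d * f k else 0) - (if (i : ℕ) + 1 = k then f k else 0)
        - (if 0 < (i : ℕ) ∧ (i : ℕ) - 1 = k then f k else 0) := by
    split_ifs <;> first | (exfalso; omega) | ring
  simp only [Ttilde, of_apply]
  rw [Fin.sum_univ_eq_sum_range (fun k => (if (i : ℕ) = k then d else
      if (i : ℕ) + 1 = k ∨ k + 1 = (i : ℕ) then (-1 : ℝ) else 0) * f k)]
  simp only [entry_mul, sum_sub_distrib, ite_and, sum_ite_irrel, sum_ite_eq, sum_const_zero,
    mem_range, if_pos i.isLt]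
  congr 1
  split_ifs <;> first | rfl | omega

noncomputable def greenKernel (n : ℕ) (c : ℝ) (i j : ℕ) : ℝ :=
  if i ≤ j then (1 - i * c) * (1 - ((n : ℝ) - 1 - j) * c)
  else (1 - j * c) * (1 - ((n : ℝ) - 1 - i) * c)

theorem greenKernel_of_le {n : ℕ} {c : ℝ} {i j : ℕ} (h : i ≤ j) :
    greenKernel n c i j = (1 - i * c) * (1 - ((n : ℝ) - 1 - j) * c) :=
  if_pos h

theorem greenKernel_of_ge {n : ℕ} {c : ℝ} {i j : ℕ} (h : j ≤ i) :
    greenKernel n c i j = (1 - j * c) * (1 - ((n : ℝ) - 1 - i) * c) := by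
  rcases h.eq_or_lt with rfl | h
  · exact if_pos le_rfl
  · exact if_neg h.not_ge

/- `greenKernel n c i j = u (min i j) * v (max i j)` with `u k = 1 - k c` and
`v k = 1 - (n - 1 - k) c`. Both are affine, hence killed by the interior rows `(-1, 2, -1)`;
for `bt = 1 - c`, `u` satisfies the first row and `v` the last one; on the diagonal one is left
with the Casoratian `u (k + 1) v k - u k v (k + 1) = c ((n - 1) c - 2)`. -/
theorem Ttilde_mul_greenKernel {n : ℕ} (hn : 2 ≤ n) (c : ℝ) :
    Ttilde n 2 (1 - c) * of (fun i j : Fin n => greenKernel n c i j) =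
      (c * (((n : ℝ) - 1) * c - 2)) • 1 := by
  ext ⟨i, hi⟩ ⟨j, hj⟩
  simp only [mul_apply, of_apply, sum_Ttilde_mul (f := fun k => greenKernel n c k j),
    Matrix.smul_apply, one_apply, Fin.mk.injEq, smul_eq_mul]
  obtain ⟨hlast, hij | rfl | hij⟩ | ⟨rfl, hij | rfl⟩ :
      (i + 1 < n ∧ (i < j ∨ i = j ∨ j < i)) ∨ (n = i + 1 ∧ (j < i ∨ i = j)) := by omega
  all_goals
    rcases i with _ | i
    all_goals
      simp (disch := omega) only [if_pos, if_neg, true_or, or_true, if_true, greenKernel_of_le,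
        greenKernel_of_ge, Nat.cast_add, Nat.cast_one, Nat.add_sub_cancel, Nat.cast_zero]
      first | (exfalso; omega) | ring

theorem casoratian_pos {n : ℕ} (hn : 4 ≤ n) {c : ℝ} (hc : 1 ≤ c) :
    0 < c * (((n : ℝ) - 1) * c - 2) := by
  have : (4 : ℝ) ≤ n := by exact_mod_cast hn
  exact mul_pos (by linarith) (by nlinarith)

theorem Ttilde_inv {n : ℕ} (hn : 2 ≤ n) {c : ℝ} (hθ : c * (((n : ℝ) - 1) * c - 2) ≠ 0) :
    (Ttilde n 2 (1 - c))⁻¹ =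
      (c * (((n : ℝ) - 1) * c - 2))⁻¹ • of (fun i j : Fin n => greenKernel n c i j) := by
  refine inv_eq_right_inv ?_
  rw [Matrix.mul_smul, Ttilde_mul_greenKernel hn, smul_smul, inv_mul_cancel₀ hθ, one_smul]

theorem sum_abs_Ttilde_inv_apply {n : ℕ} (hn : 4 ≤ n) {c : ℝ} (hc : 1 ≤ c) (i : Fin n) :
    ∑ j, |(Ttilde n 2 (1 - c))⁻¹ i j| =
      (c * (((n : ℝ) - 1) * c - 2))⁻¹ * ∑ j ∈ range n, |greenKernel n c i j| := by
  have hθ := casoratian_pos hn hc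
  rw [Ttilde_inv (by omega) hθ.ne', ← Fin.sum_univ_eq_sum_range (fun j => |greenKernel n c i j|),
    mul_sum]
  simp only [Matrix.smul_apply, of_apply, smul_eq_mul, abs_mul, abs_inv, abs_of_pos hθ]

theorem sum_range_abs_one_sub_mul {c : ℝ} (hc : 1 ≤ c) (m : ℕ) :
    ∑ j ∈ range (m + 1), |1 - j * c| = c * m * (m + 1) / 2 - m + 1 := by
  induction m with
  | zero => simp
  | succ m ih =>
    rw [sum_range_succ, ih, abs_of_nonpos (by push_cast; nlinarith)]
    push_cast
    ring

theorem sum_Ico_comp_sub {M : Type*} [AddCommMonoid M] (f : ℝ → M) {a n : ℕ} (h : a ≤ n) :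
    ∑ j ∈ Ico a n, f ((n : ℝ) - 1 - j) = ∑ j ∈ range (n - a), f j := by
  rw [sum_Ico_eq_sum_range, ← sum_range_reflect]
  refine sum_congr rfl fun k hk => congrArg f ?_
  have hk : k < n - a := mem_range.1 hk
  rw [Nat.cast_add, Nat.cast_sub (by omega), Nat.cast_sub (by omega), Nat.cast_sub h]
  push_cast
  ring

theorem sum_abs_greenKernel (n : ℕ) (c : ℝ) {i : ℕ} (hi : i < n) :
    ∑ j ∈ range n, |greenKernel n c i j| =
      |1 - ((n : ℝ) - 1 - i) * c| * ∑ j ∈ range (i + 1), |1 - j * c| +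
        |1 - i * c| * ∑ j ∈ range (n - 1 - i), |1 - j * c| := by
  rw [← sum_range_add_sum_Ico _ hi, mul_sum, mul_sum, Nat.sub_sub, add_comm 1 i,
    ← sum_Ico_comp_sub (fun x => |1 - i * c| * |1 - x * c|) hi]
  congr 1 <;> refine sum_congr rfl fun j hj => ?_
  · rw [greenKernel_of_ge (Nat.lt_succ_iff.1 (mem_range.1 hj)), abs_mul, mul_comm]
  · rw [greenKernel_of_le (Nat.le_of_succ_le (mem_Ico.1 hj).1), abs_mul]

theorem sum_abs_greenKernel_zero {n : ℕ} (hn : 0 < n) (c : ℝ) :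
    ∑ j ∈ range n, |greenKernel n c 0 j| = ∑ j ∈ range n, |1 - j * c| := by
  obtain ⟨m, rfl⟩ := Nat.exists_eq_add_of_lt hn
  rw [sum_abs_greenKernel _ c hn, sum_range_succ _ (0 + m)]
  simp only [zero_add, Nat.cast_add, Nat.cast_zero, Nat.cast_one, sum_range_one, zero_mul,
    sub_zero, abs_one, mul_one, one_mul, Nat.add_sub_cancel, Nat.sub_zero]
  rw [add_sub_cancel_right, add_comm]

theorem sum_abs_greenKernel_last {n : ℕ} (hn : 0 < n) (c : ℝ) :
    ∑ j ∈ range n, |greenKernel n c (n - 1) j| = ∑ j ∈ range n, |1 - j * c| := by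
  rw [sum_abs_greenKernel _ c (Nat.sub_lt hn one_pos), Nat.sub_one_add_one hn.ne',
    Nat.cast_pred hn, Nat.sub_self, range_zero, sum_empty]
  simp

theorem sum_abs_greenKernel_of_interior {n : ℕ} {c : ℝ} (hc : 1 ≤ c) {i : ℕ} (hi : 1 ≤ i)
    (hin : i + 2 ≤ n) :
    ∑ j ∈ range n, |greenKernel n c i j| = c * (((n : ℝ) - 1) * c - 2) *
      (((n : ℝ) + 1) ^ 2 / 8 + (4 - (1 + c) * n) / (2 * c) -
        ((n : ℝ) - 1 - 2 * i) ^ 2 / 8) := by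
  have hi' : (1 : ℝ) ≤ i := by exact_mod_cast hi
  have hin' : (i : ℝ) + 2 ≤ n := by exact_mod_cast hin
  obtain ⟨m, hm⟩ : ∃ m, n - 1 - i = m + 1 := ⟨n - 2 - i, by omega⟩
  have hm' : (m : ℝ) = n - 2 - i := by
    rw [eq_sub_iff_add_eq, eq_sub_iff_add_eq]
    exact_mod_cast (by omega : m + i + 2 = n)
  rw [sum_abs_greenKernel n c (by omega), hm, sum_range_abs_one_sub_mul hc,
    sum_range_abs_one_sub_mul hc, abs_of_nonpos (by nlinarith), abs_of_nonpos (by nlinarith), hm']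
  field_simp
  ring

theorem sum_range_abs_one_sub_mul_le {n : ℕ} (hn : 9 ≤ n) {c : ℝ} (hc : 1 ≤ c) :
    ∑ j ∈ range n, |1 - j * c| ≤
      c * (((n : ℝ) - 1) * c - 2) * (((n : ℝ) + 1) ^ 2 / 8 + (4 - (1 + c) * n) / (2 * c)) := by
  obtain ⟨m, rfl⟩ : ∃ m, n = m + 1 := ⟨n - 1, by omega⟩
  have hm : (8 : ℝ) ≤ m := by exact_mod_cast (by omega : 8 ≤ m)
  rw [sum_range_abs_one_sub_mul hc, ← sub_nonneg]
  have gap : c * ((((m + 1 : ℕ) : ℝ) - 1) * c - 2) *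
        ((((m + 1 : ℕ) : ℝ) + 1) ^ 2 / 8 + (4 - (1 + c) * (m + 1 : ℕ)) / (2 * c)) -
      (c * m * (m + 1) / 2 - m + 1) =
      (m ^ 3 * (c - 1) ^ 2 + 2 * m * (m - 1) * (m - 4) * (c - 1) +
        ((m - 8) * (m ^ 2 - 2 * m + 8) + 32)) / 8 := by
    push_cast
    field_simp
    ring
  have hc' := sub_nonneg.2 hc
  have hm₁ : (0 : ℝ) ≤ m - 1 := by linarith
  have hm₄ : (0 : ℝ) ≤ m - 4 := by linarith
  have hm₈ : (0 : ℝ) ≤ m - 8 := by linarith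
  have hq : (0 : ℝ) ≤ m ^ 2 - 2 * m + 8 := by nlinarith
  rw [gap]
  positivity

theorem sum_abs_greenKernel_le {n : ℕ} (hn : 9 ≤ n) {c : ℝ} (hc : 1 ≤ c) {i : ℕ}
    (hi : i < n) :
    ∑ j ∈ range n, |greenKernel n c i j| ≤
      c * (((n : ℝ) - 1) * c - 2) * (((n : ℝ) + 1) ^ 2 / 8 + (4 - (1 + c) * n) / (2 * c)) := by
  obtain rfl | hi₀ := Nat.eq_zero_or_pos i
  · rw [sum_abs_greenKernel_zero (by omega)]
    exact sum_range_abs_one_sub_mul_le hn hc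
  obtain rfl | hin := (Nat.le_sub_one_of_lt hi).eq_or_lt
  · rw [sum_abs_greenKernel_last (by omega)]
    exact sum_range_abs_one_sub_mul_le hn hc
  rw [sum_abs_greenKernel_of_interior hc hi₀ (by omega)]
  exact mul_le_mul_of_nonneg_left (sub_le_self _ (by positivity))
    (casoratian_pos (by omega) hc).le

theorem stmt12 (n : ℕ) (hn : 9 ≤ n) (bt : ℝ) (hbt : bt ≤ 0) :
    normInf ((Ttilde n 2 bt)⁻¹) ≤
      ((n : ℝ) + 1) ^ 2 / 8 + (4 - (2 + |bt|) * (n : ℝ)) / (2 * (1 + |bt|)) ∧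
    (Odd n →
      normInf ((Ttilde n 2 bt)⁻¹) =
        ((n : ℝ) + 1) ^ 2 / 8 + (4 - (2 + |bt|) * (n : ℝ)) / (2 * (1 + |bt|))) := by
  obtain ⟨c, rfl⟩ : ∃ c, bt = 1 - c := ⟨1 - bt, by ring⟩
  have hc : 1 ≤ c := by linarith
  have hθ := casoratian_pos (by omega : 4 ≤ n) hc
  rw [abs_of_nonpos hbt, show 2 + -(1 - c) = 1 + c by ring, show 1 + -(1 - c) = c by ring]
  have hle (i : Fin n) : ∑ j, |(Ttilde n 2 (1 - c))⁻¹ i j| ≤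
      ((n : ℝ) + 1) ^ 2 / 8 + (4 - (1 + c) * n) / (2 * c) := by
    rw [sum_abs_Ttilde_inv_apply (by omega) hc, inv_mul_le_iff₀ hθ]
    exact sum_abs_greenKernel_le hn hc i.isLt
  have : NeZero n := ⟨by omega⟩
  refine ⟨ciSup_le hle, fun ⟨t, ht⟩ => (ciSup_le hle).antisymm ?_⟩
  have hmid : ∑ j, |(Ttilde n 2 (1 - c))⁻¹ ⟨t, by omega⟩ j| =
      ((n : ℝ) + 1) ^ 2 / 8 + (4 - (1 + c) * n) / (2 * c) := by
    rw [sum_abs_Ttilde_inv_apply (by omega) hc, Fin.val_mk,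
      sum_abs_greenKernel_of_interior hc (by omega) (by omega), inv_mul_cancel_left₀ hθ.ne']
    simp [ht]
  rw [← hmid]
  exact le_ciSup (f := fun i => ∑ j, |(Ttilde n 2 (1 - c))⁻¹ i j|)
    (Set.finite_range _).bddAbove _
end
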